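/- arXiv:2003.13190 — 2 statements merged into one kernel-verified Lean document; each statement's English description precedes it below -/
import Mathlib

section
/- Let X and Y be real symmetric n×n matrices with X positive definite, and let X^{1/2} denote the positive definite square root of X. Then the 2n×2n matrix S = [[X^{1/2}, 0], [X^{−1/2}Y, X^{−1/2}]] belongs to Sp(n), and Sᵀ S = G, where G = [[X + Y X⁻¹ Y, Y X⁻¹], [X⁻¹ Y, X⁻¹]]. In particular, G is a symmetric positive definite symplectic matrix. -/
open Matrix
open scoped ComplexOrder

noncomputable section

/-- The phase space index type for `ℝ^{2m}`, split as positions ⊕ momenta. -/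
abbrev PS (m : ℕ) := Fin m ⊕ Fin m

/-- The standard symplectic matrix `J_m = [[0, I_m], [-I_m, 0]]`. -/
def symplJ (m : ℕ) : Matrix (PS m) (PS m) ℝ := Matrix.fromBlocks 0 1 (-1) 0

/-- `S ∈ Sp(m)`: `Sᵀ J_m S = J_m`. -/
def IsSymplectic {m : ℕ} (S : Matrix (PS m) (PS m) ℝ) : Prop :=
  Sᵀ * symplJ m * S = symplJ m

/-- The quantum condition `Σ + (i·hbar/2) J_m ≥ 0`, i.e. the complex Hermitian matrix
`Σ + (i·hbar/2) J_m` is positive semidefinite. -/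
def QuantumCond (m : ℕ) (hbar : ℝ) (Sig : Matrix (PS m) (PS m) ℝ) : Prop :=
  (Sig.map Complex.ofReal + (hbar / 2 : ℝ) • Complex.I • (symplJ m).map Complex.ofReal).PosSemidef

/-- `μ ∈ ℂ` is an eigenvalue of the real matrix `N` (viewed as a complex matrix). -/
def IsEigenvalue {ι : Type} [Fintype ι] [DecidableEq ι] (N : Matrix ι ι ℝ) (μ : ℂ) : Prop :=
  (N.map Complex.ofReal - μ • 1).det = 0

lemma symplJ_mul_self (m : ℕ) : symplJ m * symplJ m = -1 := by
  ext i j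
  rcases i with i | i <;> rcases j with j | j <;>
    simp [symplJ, Matrix.fromBlocks_multiply, Matrix.one_apply]

lemma aux_isUnit {m : ℕ} {S : Matrix (PS m) (PS m) ℝ} (h : IsSymplectic S) :
    IsUnit S := by
  have hts : (-(symplJ m * Sᵀ * symplJ m)) * S = 1 := by
    have : symplJ m * (Sᵀ * symplJ m * S) = symplJ m * symplJ m := by rw [h]
    rw [symplJ_mul_self] at this
    calc (-(symplJ m * Sᵀ * symplJ m)) * S
        = -(symplJ m * (Sᵀ * symplJ m * S)) := by noncomm_ring
      _ = 1 := by rw [this]; simp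
  exact (Matrix.isUnit_iff_isUnit_det _).mpr (Matrix.isUnit_det_of_left_inverse hts)

lemma symp_transpose {m : ℕ} {S : Matrix (PS m) (PS m) ℝ} (h : IsSymplectic S) :
    S * symplJ m * Sᵀ = symplJ m := by
  have hts : (-(symplJ m * Sᵀ * symplJ m)) * S = 1 := by
    have : symplJ m * (Sᵀ * symplJ m * S) = symplJ m * symplJ m := by rw [h]
    rw [symplJ_mul_self] at this
    calc (-(symplJ m * Sᵀ * symplJ m)) * S
        = -(symplJ m * (Sᵀ * symplJ m * S)) := by noncomm_ring
      _ = 1 := by rw [this]; simp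
  have hst : S * (-(symplJ m * Sᵀ * symplJ m)) = 1 := mul_eq_one_comm.mp hts
  have h2 : S * symplJ m * Sᵀ * (symplJ m * symplJ m) = -(symplJ m) := by
    calc S * symplJ m * Sᵀ * (symplJ m * symplJ m)
        = (S * (-(symplJ m * Sᵀ * symplJ m))) * (-(symplJ m)) := by noncomm_ring
      _ = -(symplJ m) := by rw [hst]; simp
  rw [symplJ_mul_self] at h2
  simpa using h2

lemma posDef_transpose_mul_self {ι : Type} [Fintype ι] [DecidableEq ι]
    (S : Matrix ι ι ℝ) (hS : IsUnit S) : (Sᵀ * S).PosDef := by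
  rw [Matrix.posDef_iff_dotProduct_mulVec]
  constructor
  · have := (Matrix.posSemidef_conjTranspose_mul_self S).1
    simpa using this
  · intro x hx
    have hSx : S *ᵥ x ≠ 0 := by
      intro h0
      exact hx (Matrix.mulVec_injective_iff_isUnit.mpr hS (by simpa using h0))
    have : x ⬝ᵥ ((Sᵀ * S) *ᵥ x) = (S *ᵥ x) ⬝ᵥ (S *ᵥ x) := by
      rw [← Matrix.mulVec_mulVec, Matrix.dotProduct_mulVec, Matrix.vecMul_transpose]
    simp only [star_trivial]
    rw [this]
    have := Matrix.dotProduct_self_star_pos_iff.mpr hSx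
    simpa using this

/-- for real symmetric `n×n` matrices `X`, `Y` with `X` positive definite and
`X^{1/2}` its positive definite square root, the matrix
`S = [[X^{1/2}, 0], [X^{-1/2}Y, X^{-1/2}]]` is symplectic and `SᵀS = G`, where
`G = [[X + YX⁻¹Y, YX⁻¹], [X⁻¹Y, X⁻¹]]`; in particular `G` is a symmetric positive definite
symplectic matrix. -/
theorem statement9 (n : ℕ) (X Y : Matrix (Fin n) (Fin n) ℝ)
    (hX : X.IsSymm) (hY : Y.IsSymm) (hXpos : X.PosDef)
    (Xs : Matrix (Fin n) (Fin n) ℝ) (hXs : Xs.PosDef) (hXssq : Xs * Xs = X) :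
    IsSymplectic (Matrix.fromBlocks Xs 0 (Xs⁻¹ * Y) Xs⁻¹) ∧
    (Matrix.fromBlocks Xs 0 (Xs⁻¹ * Y) Xs⁻¹)ᵀ * Matrix.fromBlocks Xs 0 (Xs⁻¹ * Y) Xs⁻¹ =
      Matrix.fromBlocks (X + Y * X⁻¹ * Y) (Y * X⁻¹) (X⁻¹ * Y) X⁻¹ ∧
    (Matrix.fromBlocks (X + Y * X⁻¹ * Y) (Y * X⁻¹) (X⁻¹ * Y) X⁻¹).IsSymm ∧
    (Matrix.fromBlocks (X + Y * X⁻¹ * Y) (Y * X⁻¹) (X⁻¹ * Y) X⁻¹).PosDef ∧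
    IsSymplectic (Matrix.fromBlocks (X + Y * X⁻¹ * Y) (Y * X⁻¹) (X⁻¹ * Y) X⁻¹) := by
  set S := Matrix.fromBlocks Xs 0 (Xs⁻¹ * Y) Xs⁻¹ with hSdef
  have hXsU : IsUnit Xs := hXs.isUnit
  have hXsinv : Xs⁻¹ * Xs = 1 := Matrix.nonsing_inv_mul _ (Matrix.isUnit_iff_isUnit_det _ |>.mp hXsU)
  have hXsinv' : Xs * Xs⁻¹ = 1 := Matrix.mul_nonsing_inv _ (Matrix.isUnit_iff_isUnit_det _ |>.mp hXsU)
  have hXsT : Xsᵀ = Xs := by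
    have := hXs.1
    simpa [Matrix.IsHermitian, Matrix.conjTranspose_eq_transpose_of_trivial] using this
  have hXsiT : (Xs⁻¹)ᵀ = Xs⁻¹ := by rw [Matrix.transpose_nonsing_inv, hXsT]
  have hXinv : X⁻¹ = Xs⁻¹ * Xs⁻¹ := by rw [← hXssq, Matrix.mul_inv_rev]
  have hST : Sᵀ = Matrix.fromBlocks Xs (Y * Xs⁻¹) 0 Xs⁻¹ := by
    rw [hSdef, Matrix.fromBlocks_transpose, hXsT, hXsiT, Matrix.transpose_mul, hXsiT,
      hY.eq]
    simp
  have hsymp : IsSymplectic S := by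
    unfold IsSymplectic
    rw [hST, hSdef, symplJ]
    simp only [Matrix.fromBlocks_multiply]
    have h1 : Xs * (Xs⁻¹ * Y) = Y := by rw [← Matrix.mul_assoc, hXsinv', Matrix.one_mul]
    have h2 : Y * Xs⁻¹ * Xs = Y := by rw [Matrix.mul_assoc, hXsinv, Matrix.mul_one]
    congr 1 <;> try congr 1
    all_goals simp [Matrix.mul_assoc, hXsinv, hXsinv', h1, h2]
  have hG : Sᵀ * S = Matrix.fromBlocks (X + Y * X⁻¹ * Y) (Y * X⁻¹) (X⁻¹ * Y) X⁻¹ := by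
    rw [hST, hSdef]
    simp only [Matrix.fromBlocks_multiply, hXinv]
    congr 1
    · rw [hXssq]; simp [Matrix.mul_assoc]
    all_goals simp [Matrix.mul_assoc]
  have hGsym : (Matrix.fromBlocks (X + Y * X⁻¹ * Y) (Y * X⁻¹) (X⁻¹ * Y) X⁻¹).IsSymm := by
    rw [← hG]
    unfold Matrix.IsSymm
    rw [Matrix.transpose_mul, Matrix.transpose_transpose]
  have hGpos : (Matrix.fromBlocks (X + Y * X⁻¹ * Y) (Y * X⁻¹) (X⁻¹ * Y) X⁻¹).PosDef := by
    rw [← hG]; exact posDef_transpose_mul_self S (aux_isUnit hsymp)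
  refine ⟨hsymp, hG, hGsym, hGpos, ?_⟩
  unfold IsSymplectic
  rw [hGsym.eq, ← hG]
  calc Sᵀ * S * symplJ n * (Sᵀ * S)
      = Sᵀ * (S * symplJ n * Sᵀ) * S := by noncomm_ring
    _ = symplJ n := by rw [symp_transpose hsymp]; exact hsymp
end
end

section
/- Let Σ be a real symmetric positive definite 2n×2n matrix (n = n_A + n_B), ħ > 0, and M = (ħ/2)Σ⁻¹ with blocks M_AA, M_AB, M_BA = M_ABᵀ, M_BB. Set M̃_AA = M_AA + ‖M_AB‖_op · I_{2n_A} and M̃_BB = M_BB + ‖M_AB‖_op · I_{2n_B}, where ‖M_AB‖_op is the operator (spectral) norm of M_AB (which equals ‖M_BA‖_op). If every complex eigenvalue of J_{n_A}·M̃_AA has modulus ≤ 1 and every complex eigenvalue of J_{n_B}·M̃_BB has modulus ≤ 1 (i.e., all symplectic eigenvalues of M̃_AA and of M̃_BB are ≤ 1), then the Werner–Wolf separability condition holds for Σ: there exist real symmetric Σ_A, Σ_B with Σ_A + (iħ/2)J_{n_A} ≥ 0, Σ_B + (iħ/2)J_{n_B} ≥ 0, and Σ − (Σ_A ⊕ Σ_B)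 positive semidefinite; hence the Gaussian state with covariance matrix Σ is separable. -/
open Matrix
open scoped ComplexOrder

noncomputable section

/-- The Werner–Wolf separability condition for a covariance matrix `Σ` on
`ℝ^{2n_A} ⊕ ℝ^{2n_B}`: there exist real symmetric `Σ_A`, `Σ_B` satisfying the quantum
conditions and with `Σ - Σ_A ⊕ Σ_B` positive semidefinite.  It is necessary and sufficient
for the separability of the Gaussian state with covariance matrix `Σ`. -/
def WernerWolf (nA nB : ℕ) (hbar : ℝ)
    (Sig : Matrix (PS nA ⊕ PS nB) (PS nA ⊕ PS nB) ℝ) : Prop :=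
  ∃ (SigA : Matrix (PS nA) (PS nA) ℝ) (SigB : Matrix (PS nB) (PS nB) ℝ),
    SigA.IsSymm ∧ SigB.IsSymm ∧
    QuantumCond nA hbar SigA ∧ QuantumCond nB hbar SigB ∧
    (Sig - Matrix.fromBlocks SigA 0 0 SigB).PosSemidef


-- ===== auxiliary lemmas =====
set_option linter.unusedSectionVars false
set_option maxHeartbeats 1000000

variable {ι : Type} [Fintype ι] [DecidableEq ι]

lemma isUnitDet_of_posDef {𝕜 : Type*} [RCLike 𝕜] {A : Matrix ι ι 𝕜} (hA : A.PosDef) :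
    IsUnit A.det := isUnit_iff_ne_zero.2 hA.det_pos.ne'

lemma smul_posSemidef_real {c : ℝ} (hc : 0 ≤ c) {A : Matrix ι ι ℝ} (hA : A.PosSemidef) :
    (c • A).PosSemidef := by
  refine Matrix.PosSemidef.of_dotProduct_mulVec_nonneg ?_ ?_
  · unfold Matrix.IsHermitian
    rw [conjTranspose_smul, hA.1.eq, star_trivial]
  · intro x
    rw [Matrix.smul_mulVec, dotProduct_smul, smul_eq_mul]
    exact mul_nonneg hc (hA.dotProduct_mulVec_nonneg x)

lemma smul_posSemidef_complex {c : ℝ} (hc : 0 ≤ c) {A : Matrix ι ι ℂ} (hA : A.PosSemidef) :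
    (c • A).PosSemidef := by
  refine Matrix.PosSemidef.of_dotProduct_mulVec_nonneg ?_ ?_
  · unfold Matrix.IsHermitian
    rw [conjTranspose_smul, hA.1.eq, star_trivial]
  · intro x
    have hmv : (c • A) *ᵥ x = c • (A *ᵥ x) := Matrix.smul_mulVec c A x
    rw [hmv, dotProduct_smul]
    have h0 := hA.dotProduct_mulVec_nonneg x
    rw [Complex.real_smul]
    exact mul_nonneg (by exact_mod_cast Complex.zero_le_real.2 hc) h0

lemma map_inv_ofReal {A : Matrix ι ι ℝ} (hA : IsUnit A.det) :
    (A⁻¹).map Complex.ofReal = (A.map Complex.ofReal)⁻¹ := by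
  have h1 : A.map Complex.ofReal * (A⁻¹).map Complex.ofReal = 1 := by
    have hco : ⇑(Complex.ofRealHom) = Complex.ofReal := rfl
    have h2 := (Matrix.map_mul (L := A) (M := A⁻¹) (f := Complex.ofRealHom)).symm
    rw [hco] at h2
    rw [h2, Matrix.mul_nonsing_inv _ hA]
    ext i j; simp [Matrix.one_apply, Matrix.map_apply, apply_ite Complex.ofReal]
  exact (Matrix.inv_eq_right_inv h1).symm

/-- conjugation of PSD by a Hermitian matrix -/
lemma psd_conj {𝕜 : Type*} [RCLike 𝕜] {M T : Matrix ι ι 𝕜} (hM : M.PosSemidef)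
    (hT : T.IsHermitian) : (T * M * T).PosSemidef := by
  have := hM.conjTranspose_mul_mul_same (B := T)
  rwa [hT.eq] at this

open scoped MatrixOrder in
lemma inv_sub_inv_posSemidef {A B : Matrix ι ι ℝ} (hA : A.PosDef) (hB : B.PosDef)
    (h : (B - A).PosSemidef) : (A⁻¹ - B⁻¹).PosSemidef := by
  have hBinv : (B⁻¹).PosDef := hB.inv
  set T := CFC.sqrt (B⁻¹) with hTdef
  have hT : T.PosSemidef := Matrix.nonneg_iff_posSemidef.mp (CFC.sqrt_nonneg _)
  have hTT : T * T = B⁻¹ := CFC.sqrt_mul_sqrt_self _ hBinv.posSemidef.nonneg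
  have hTH : T.IsHermitian := hT.1
  have hdetT : IsUnit T.det := by
    have h2 : T.det * T.det = (B⁻¹).det := by rw [← det_mul, hTT]
    have h3 : (B⁻¹).det ≠ 0 := hBinv.det_pos.ne'
    exact isUnit_iff_ne_zero.2 fun h0 => h3 (by rw [← h2, h0, zero_mul])
  have hTi : T⁻¹ * T = 1 := nonsing_inv_mul T hdetT
  have hTi' : T * T⁻¹ = 1 := mul_nonsing_inv T hdetT
  have hBeq : B = T⁻¹ * T⁻¹ := by
    rw [← Matrix.mul_inv_rev, hTT, Matrix.nonsing_inv_nonsing_inv B (isUnit_iff_ne_zero.2 hB.det_pos.ne')]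
  have hTBT : T * B * T = 1 := by
    rw [hBeq, ← mul_assoc, mul_assoc (T * T⁻¹), hTi', hTi, one_mul]
  set C := T * A * T with hCdef
  have hC : C.PosSemidef := psd_conj hA.posSemidef hTH
  have h1C : (1 - C).PosSemidef := by
    have := psd_conj h hTH
    have he : T * (B - A) * T = 1 - C := by
      rw [Matrix.mul_sub, Matrix.sub_mul, hTBT, hCdef]
    rwa [he] at this
  have hdetC : IsUnit C.det := by
    have : C.det = T.det * A.det * T.det := by rw [hCdef, det_mul, det_mul]
    rw [this]
    exact (hdetT.mul (isUnit_iff_ne_zero.2 hA.det_pos.ne')).mul hdetT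
  set R := CFC.sqrt C with hRdef
  have hR : R.PosSemidef := Matrix.nonneg_iff_posSemidef.mp (CFC.sqrt_nonneg _)
  have hRR : R * R = C := CFC.sqrt_mul_sqrt_self _ hC.nonneg
  have hRH : R.IsHermitian := hR.1
  have hdetR : IsUnit R.det := by
    have h2 : R.det * R.det = C.det := by rw [← det_mul, hRR]
    exact isUnit_iff_ne_zero.2 fun h0 => (isUnit_iff_ne_zero.1 hdetC) (by rw [← h2, h0, zero_mul])
  have hRi : R⁻¹ * R = 1 := nonsing_inv_mul R hdetR
  have hRi' : R * R⁻¹ = 1 := mul_nonsing_inv R hdetR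
  have hRinvH : (R⁻¹).IsHermitian := by
    unfold Matrix.IsHermitian
    rw [Matrix.conjTranspose_nonsing_inv, hRH.eq]
  have hCinv : (C⁻¹ - 1).PosSemidef := by
    have hps := psd_conj h1C hRinvH
    have e1 : R⁻¹ * R⁻¹ = C⁻¹ := by rw [← Matrix.mul_inv_rev, hRR]
    have e2 : R⁻¹ * C * R⁻¹ = 1 := by
      rw [← hRR, ← mul_assoc, hRi, one_mul, hRi']
    have he : R⁻¹ * (1 - C) * R⁻¹ = C⁻¹ - 1 := by
      rw [Matrix.mul_sub, mul_one, Matrix.sub_mul, e1, e2]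
    rwa [he] at hps
  have hfin := psd_conj hCinv hTH
  have he2 : T * (C⁻¹ - 1) * T = A⁻¹ - B⁻¹ := by
    have hCi : C⁻¹ = T⁻¹ * A⁻¹ * T⁻¹ := by
      rw [hCdef, Matrix.mul_inv_rev, Matrix.mul_inv_rev, mul_assoc]
    rw [Matrix.mul_sub, Matrix.sub_mul, mul_one, hTT, hCi]
    congr 1
    rw [← mul_assoc, ← mul_assoc, hTi', one_mul, mul_assoc, hTi, mul_one]
  rwa [he2] at hfin

lemma symplJ_transpose (m : ℕ) : (symplJ m)ᵀ = -symplJ m := by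
  unfold symplJ
  rw [Matrix.fromBlocks_transpose, Matrix.fromBlocks_neg]
  simp

open scoped MatrixOrder in
lemma quantum_aux {m : ℕ} {N : Matrix (PS m) (PS m) ℝ} (hN : N.PosDef)
    (h : ∀ μ : ℂ, IsEigenvalue (symplJ m * N) μ → ‖μ‖ ≤ 1) :
    ((N⁻¹).map Complex.ofReal + Complex.I • (symplJ m).map Complex.ofReal).PosSemidef := by
  classical
  set c : ℝ → ℂ := Complex.ofReal with hc
  have hco : ⇑(Complex.ofRealHom) = c := rfl
  set Jc : Matrix (PS m) (PS m) ℂ := (symplJ m).map c with hJc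
  set Sr : Matrix (PS m) (PS m) ℝ := CFC.sqrt N with hSr
  have hSrP : Sr.PosSemidef := Matrix.nonneg_iff_posSemidef.mp (CFC.sqrt_nonneg _)
  have hSrSr : Sr * Sr = N := CFC.sqrt_mul_sqrt_self _ hN.posSemidef.nonneg
  set S : Matrix (PS m) (PS m) ℂ := Sr.map c with hS
  have hSS : S * S = N.map c := by
    rw [hS, ← hSrSr]
    exact (Matrix.map_mul (L := Sr) (M := Sr) (f := Complex.ofRealHom)).symm
  have hSH : S.IsHermitian := by
    unfold Matrix.IsHermitian
    ext i j
    have := hSrP.1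
    unfold Matrix.IsHermitian at this
    have h2 : Sr j i = Sr i j := by
      conv_lhs => rw [show Sr j i = Srᴴ i j from rfl, this]
    simp [hS, Matrix.conjTranspose_apply, Matrix.map_apply, hc, Complex.conj_ofReal, h2]
  have hdetSr : Sr.det ≠ 0 := by
    intro h0
    have h2 : Sr.det * Sr.det = N.det := by rw [← det_mul, hSrSr]
    rw [h0, zero_mul] at h2
    exact hN.det_pos.ne' h2.symm
  have hdetS : IsUnit S.det := by
    have hd := RingHom.map_det Complex.ofRealHom Sr
    rw [RingHom.mapMatrix_apply] at hd
    rw [hS, ← hco, ← hd]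
    exact isUnit_iff_ne_zero.2 (by simpa using hdetSr)
  have hSi : S⁻¹ * S = 1 := nonsing_inv_mul S hdetS
  have hSi' : S * S⁻¹ = 1 := mul_nonsing_inv S hdetS
  have hJcH : Jcᴴ = -Jc := by
    ext i j
    have ht : (symplJ m) j i = (-symplJ m) i j := by rw [← symplJ_transpose]; rfl
    simp [hJc, Matrix.conjTranspose_apply, Matrix.map_apply, hc, Complex.conj_ofReal, ht]
  set K : Matrix (PS m) (PS m) ℂ := S * Jc * S with hK
  set H : Matrix (PS m) (PS m) ℂ := 1 + Complex.I • K with hH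
  have hKH : Kᴴ = -K := by
    rw [hK, Matrix.conjTranspose_mul, Matrix.conjTranspose_mul, hJcH, hSH.eq]
    rw [Matrix.neg_mul, Matrix.mul_neg, ← mul_assoc]
  have hHH : H.IsHermitian := by
    unfold Matrix.IsHermitian
    rw [hH, Matrix.conjTranspose_add, Matrix.conjTranspose_one, Matrix.conjTranspose_smul,
      hKH, Complex.star_def, Complex.conj_I, neg_smul, smul_neg, neg_neg]
  have hHpsd : H.PosSemidef := by
    rw [hHH.posSemidef_iff_eigenvalues_nonneg]
    intro i
    rw [Pi.zero_apply]
    set t : ℝ := hHH.eigenvalues i with htd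
    set v := hHH.eigenvectorBasis i with hvd
    have hv : H *ᵥ ⇑v = t • ⇑v := hHH.mulVec_eigenvectorBasis i
    have hvne : (⇑v : PS m → ℂ) ≠ 0 := by
      have hb : v ≠ 0 := by
        have := hHH.eigenvectorBasis.toBasis.ne_zero i
        rwa [OrthonormalBasis.coe_toBasis] at this
      intro hz
      apply hb
      ext j
      exact congrFun hz j
    have hdet1 : (H - (t : ℂ) • 1).det = 0 := by
      rw [← Matrix.exists_mulVec_eq_zero_iff]
      refine ⟨⇑v, hvne, ?_⟩
      rw [Matrix.sub_mulVec, hv, Matrix.smul_mulVec, Matrix.one_mulVec]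
      funext j
      simp [Complex.real_smul]
    set μ : ℂ := Complex.I * (1 - (t : ℂ)) with hμ
    have hIμ : Complex.I * μ = (t : ℂ) - 1 := by
      rw [hμ, ← mul_assoc, Complex.I_mul_I]; ring
    have hkey : H - (t : ℂ) • 1 = Complex.I • (K - μ • 1) := by
      rw [smul_sub, smul_smul, hIμ, hH]
      module
    have hdet2 : (K - μ • 1).det = 0 := by
      have := hdet1
      rw [hkey, Matrix.det_smul] at this
      rcases mul_eq_zero.1 this with h0 | h0
      · exact absurd h0 (pow_ne_zero _ Complex.I_ne_zero)
      · exact h0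
    have hsim : S⁻¹ * (K - μ • 1) * S = Jc * (N.map c) - μ • 1 := by
      rw [Matrix.mul_sub, Matrix.sub_mul, Matrix.mul_smul, mul_one, Matrix.smul_mul, hSi]
      congr 1
      rw [hK, ← mul_assoc, ← mul_assoc, hSi, one_mul, mul_assoc, hSS]
    have hdet3 : IsEigenvalue (symplJ m * N) μ := by
      unfold IsEigenvalue
      have hmm : (symplJ m * N).map Complex.ofReal = Jc * (N.map c) := by
        rw [← hco]
        exact Matrix.map_mul (f := Complex.ofRealHom)
      rw [hmm, ← hsim, det_mul, det_mul, hdet2, mul_zero, zero_mul]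
    have habs := h μ hdet3
    have : ‖μ‖ = |1 - t| := by
      rw [hμ, norm_mul, Complex.norm_I, one_mul]
      rw [show (1 : ℂ) - (t : ℂ) = ((1 - t : ℝ) : ℂ) by push_cast; ring, Complex.norm_real, Real.norm_eq_abs]
    rw [this] at habs
    have := abs_le.1 habs
    linarith [this.2]
  have hSinvH : (S⁻¹).IsHermitian := by
    unfold Matrix.IsHermitian
    rw [Matrix.conjTranspose_nonsing_inv, hSH.eq]
  have hfin : (S⁻¹ * H * S⁻¹).PosSemidef := by
    have := hHpsd.conjTranspose_mul_mul_same (B := S⁻¹)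
    rwa [hSinvH.eq] at this
  have heq : S⁻¹ * H * S⁻¹ = (N⁻¹).map Complex.ofReal + Complex.I • Jc := by
    have hNinv : (N⁻¹).map Complex.ofReal = (N.map c)⁻¹ := by
      have h1 : N.map c * (N⁻¹).map c = 1 := by
        have h2 := (Matrix.map_mul (L := N) (M := N⁻¹) (f := Complex.ofRealHom)).symm
        rw [hco] at h2
        rw [h2, Matrix.mul_nonsing_inv _ (isUnit_iff_ne_zero.2 hN.det_pos.ne')]
        ext i j; simp [Matrix.one_apply, Matrix.map_apply, hc, apply_ite Complex.ofReal]
      exact (Matrix.inv_eq_right_inv h1).symm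
    rw [hH, Matrix.mul_add, Matrix.add_mul, mul_one, hNinv, ← Matrix.mul_inv_rev, hSS]
    congr 1
    rw [Matrix.mul_smul, Matrix.smul_mul]
    congr 1
    rw [hK, ← mul_assoc, ← mul_assoc, hSi, one_mul, mul_assoc, hSi', mul_one]
  rwa [heq] at hfin

lemma isSymm_of_isHermitian {ι : Type} [Fintype ι] {A : Matrix ι ι ℝ} (h : A.IsHermitian) :
    A.IsSymm := by
  unfold Matrix.IsSymm
  ext i j
  rw [Matrix.transpose_apply, ← h.apply i j, star_trivial]

lemma smul_posDef_real {ι : Type} [Fintype ι] {c : ℝ} (hc : 0 < c) {A : Matrix ι ι ℝ}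
    (hA : A.PosDef) : (c • A).PosDef := by
  refine Matrix.PosDef.of_dotProduct_mulVec_pos ?_ ?_
  · unfold Matrix.IsHermitian
    rw [conjTranspose_smul, hA.1.eq, star_trivial]
  · intro x hx
    rw [Matrix.smul_mulVec, dotProduct_smul, smul_eq_mul]
    exact mul_pos hc (hA.dotProduct_mulVec_pos hx)

lemma posDef_toBlocks₁₁ {a b : Type} [Fintype a] [Fintype b] [DecidableEq a] [DecidableEq b]
    {M : Matrix (a ⊕ b) (a ⊕ b) ℝ} (hM : M.PosDef) : M.toBlocks₁₁.PosDef := by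
  refine Matrix.PosDef.of_dotProduct_mulVec_pos ?_ ?_
  · ext i j
    exact hM.1.apply (Sum.inl i) (Sum.inl j)
  · intro x hx
    have hu : (Sum.elim x 0 : a ⊕ b → ℝ) ≠ 0 := by
      intro h0
      exact hx (funext fun i => congrFun h0 (Sum.inl i))
    have h2 := hM.dotProduct_mulVec_pos hu
    rw [star_trivial] at h2
    have key : (Sum.elim x 0) ⬝ᵥ (M *ᵥ Sum.elim x 0) = x ⬝ᵥ (M.toBlocks₁₁ *ᵥ x) := by
      conv_lhs => rw [← Matrix.fromBlocks_toBlocks M]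
      rw [Matrix.fromBlocks_mulVec, sumElim_dotProduct_sumElim]
      simp
    rw [star_trivial, ← key]
    exact h2

lemma posDef_toBlocks₂₂ {a b : Type} [Fintype a] [Fintype b] [DecidableEq a] [DecidableEq b]
    {M : Matrix (a ⊕ b) (a ⊕ b) ℝ} (hM : M.PosDef) : M.toBlocks₂₂.PosDef := by
  refine Matrix.PosDef.of_dotProduct_mulVec_pos ?_ ?_
  · ext i j
    exact hM.1.apply (Sum.inr i) (Sum.inr j)
  · intro x hx
    have hu : (Sum.elim 0 x : a ⊕ b → ℝ) ≠ 0 := by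
      intro h0
      exact hx (funext fun i => congrFun h0 (Sum.inr i))
    have h2 := hM.dotProduct_mulVec_pos hu
    rw [star_trivial] at h2
    have key : (Sum.elim 0 x) ⬝ᵥ (M *ᵥ Sum.elim 0 x) = x ⬝ᵥ (M.toBlocks₂₂ *ᵥ x) := by
      conv_lhs => rw [← Matrix.fromBlocks_toBlocks M]
      rw [Matrix.fromBlocks_mulVec, sumElim_dotProduct_sumElim]
      simp
    rw [star_trivial, ← key]
    exact h2

lemma dotProduct_sq_le {ι : Type} [Fintype ι] (f g : ι → ℝ) :
    (f ⬝ᵥ g) ^ 2 ≤ (f ⬝ᵥ f) * (g ⬝ᵥ g) := by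
  have := Finset.sum_mul_sq_le_sq_mul_sq Finset.univ f g
  simpa [dotProduct, pow_two] using this

lemma fromBlocks_sub' {a b : Type} (A A' : Matrix a a ℝ) (B B' : Matrix a b ℝ)
    (C C' : Matrix b a ℝ) (D D' : Matrix b b ℝ) :
    Matrix.fromBlocks A B C D - Matrix.fromBlocks A' B' C' D'
      = Matrix.fromBlocks (A - A') (B - B') (C - C') (D - D') := by
  ext i j
  cases i <;> cases j <;> simp [Matrix.fromBlocks, Matrix.sub_apply]

lemma block_psd {a b : Type} [Fintype a] [Fintype b] [DecidableEq a] [DecidableEq b]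
    {ν : ℝ} (hν0 : 0 ≤ ν) {Q : Matrix a b ℝ}
    (hbound : ∀ y : b → ℝ, (Q *ᵥ y) ⬝ᵥ (Q *ᵥ y) ≤ (ν * ν) * (y ⬝ᵥ y)) :
    (Matrix.fromBlocks (ν • (1 : Matrix a a ℝ)) (-Q) (-Qᵀ) (ν • (1 : Matrix b b ℝ))).PosSemidef
    := by
  refine Matrix.PosSemidef.of_dotProduct_mulVec_nonneg ?_ ?_
  · show _ = _
    rw [Matrix.fromBlocks_conjTranspose]
    have h1 : (ν • (1 : Matrix a a ℝ))ᴴ = ν • 1 := by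
      rw [conjTranspose_smul, star_trivial, Matrix.conjTranspose_one]
    have h2 : (ν • (1 : Matrix b b ℝ))ᴴ = ν • 1 := by
      rw [conjTranspose_smul, star_trivial, Matrix.conjTranspose_one]
    have h3 : (-Q)ᴴ = -Qᵀ := by
      ext i j
      rw [Matrix.conjTranspose_apply, star_trivial]
      simp
    have h4 : (-Qᵀ)ᴴ = -Q := by
      ext i j
      rw [Matrix.conjTranspose_apply, star_trivial]
      simp
    rw [h1, h2, h3, h4]
  · intro u
    obtain ⟨x, y, rfl⟩ : ∃ x y, u = Sum.elim x y :=
      ⟨u ∘ Sum.inl, u ∘ Sum.inr, by funext i; cases i <;> rfl⟩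
    rw [star_trivial, Matrix.fromBlocks_mulVec]
    simp only [Sum.elim_comp_inl, Sum.elim_comp_inr]
    rw [sumElim_dotProduct_sumElim]
    have hQt : y ⬝ᵥ ((-Qᵀ) *ᵥ x) = -(x ⬝ᵥ (Q *ᵥ y)) := by
      rw [Matrix.neg_mulVec, dotProduct_neg, Matrix.mulVec_transpose,
        Matrix.dotProduct_mulVec x Q y, dotProduct_comm]
    have hsmulx : x ⬝ᵥ ((ν • (1 : Matrix a a ℝ)) *ᵥ x) = ν * (x ⬝ᵥ x) := by
      rw [Matrix.smul_mulVec, Matrix.one_mulVec, dotProduct_smul, smul_eq_mul]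
    have hsmuly : y ⬝ᵥ ((ν • (1 : Matrix b b ℝ)) *ᵥ y) = ν * (y ⬝ᵥ y) := by
      rw [Matrix.smul_mulVec, Matrix.one_mulVec, dotProduct_smul, smul_eq_mul]
    rw [dotProduct_add, dotProduct_add, hQt, hsmulx, hsmuly]
    rw [Matrix.neg_mulVec, dotProduct_neg]
    set s : ℝ := x ⬝ᵥ (Q *ᵥ y) with hs
    set p : ℝ := x ⬝ᵥ x with hp
    set q : ℝ := y ⬝ᵥ y with hq
    have hp0 : 0 ≤ p := by
      rw [hp]; exact Finset.sum_nonneg fun i _ => mul_self_nonneg _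
    have hq0 : 0 ≤ q := by
      rw [hq]; exact Finset.sum_nonneg fun i _ => mul_self_nonneg _
    have hcs : s ^ 2 ≤ p * ((ν * ν) * q) := by
      calc s ^ 2 ≤ p * ((Q *ᵥ y) ⬝ᵥ (Q *ᵥ y)) := dotProduct_sq_le x (Q *ᵥ y)
        _ ≤ p * ((ν * ν) * q) := mul_le_mul_of_nonneg_left (hbound y) hp0
    have ht : 0 ≤ ν * p + ν * q := add_nonneg (mul_nonneg hν0 hp0) (mul_nonneg hν0 hq0)
    have hab : (2 * s) ^ 2 ≤ (ν * p + ν * q) ^ 2 := by nlinarith [hcs, sq_nonneg (ν * p - ν * q)]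
    have h2 : 2 * s ≤ ν * p + ν * q := by nlinarith [hab, ht]
    linarith


-- ===== main theorem =====
/-- first separability criterion: with `M = (hbar/2)Σ⁻¹` written in blocks,
`ν = ‖M_AB‖_op` (characterized as the least upper bound of `|M_AB z_B|` over unit vectors
`z_B`), if all symplectic eigenvalues of `M_AA + ν·I` and `M_BB + ν·I` are `≤ 1`
(i.e. all complex eigenvalues of `J·(M_AA + ν·I)` and `J·(M_BB + ν·I)` have modulus `≤ 1`),
then the Werner–Wolf separability condition holds for `Σ`, hence the Gaussian state with
covariance matrix `Σ` is separable. -/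
theorem statement11 (nA nB : ℕ) (hA : 0 < nA) (hB : 0 < nB) (hbar : ℝ) (hhb : 0 < hbar)
    (Sig : Matrix (PS nA ⊕ PS nB) (PS nA ⊕ PS nB) ℝ) (hsym : Sig.IsSymm) (hpos : Sig.PosDef)
    (ν : ℝ)
    (hν : IsLUB {c : ℝ | ∃ zB : PS nB → ℝ, zB ⬝ᵥ zB = 1 ∧
        c = Real.sqrt ((((hbar / 2) • Sig⁻¹).toBlocks₁₂ *ᵥ zB) ⬝ᵥ
              (((hbar / 2) • Sig⁻¹).toBlocks₁₂ *ᵥ zB))} ν)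
    (hAc : ∀ μ : ℂ, IsEigenvalue
        (symplJ nA * (((hbar / 2) • Sig⁻¹).toBlocks₁₁ + ν • 1)) μ → ‖μ‖ ≤ 1)
    (hBc : ∀ μ : ℂ, IsEigenvalue
        (symplJ nB * (((hbar / 2) • Sig⁻¹).toBlocks₂₂ + ν • 1)) μ → ‖μ‖ ≤ 1) :
    WernerWolf nA nB hbar Sig := by
  classical
  set P : Matrix (PS nA ⊕ PS nB) (PS nA ⊕ PS nB) ℝ := (hbar / 2) • Sig⁻¹ with hPdef
  have hhb2 : (0 : ℝ) < hbar / 2 := by linarith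
  have hP : P.PosDef := smul_posDef_real hhb2 hpos.inv
  have hP11 : P.toBlocks₁₁.PosDef := posDef_toBlocks₁₁ hP
  have hP22 : P.toBlocks₂₂.PosDef := posDef_toBlocks₂₂ hP
  set Q : Matrix (PS nA) (PS nB) ℝ := P.toBlocks₁₂ with hQdef
  -- ν is nonnegative
  have hν0 : 0 ≤ ν := by
    set z0 : PS nB → ℝ := Pi.single (Sum.inl ⟨0, hB⟩) 1 with hz0
    have hz0n : z0 ⬝ᵥ z0 = 1 := by
      simp [hz0, dotProduct, Pi.single_apply]
    have hmem : Real.sqrt ((Q *ᵥ z0) ⬝ᵥ (Q *ᵥ z0)) ∈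
        {c : ℝ | ∃ zB : PS nB → ℝ, zB ⬝ᵥ zB = 1 ∧
          c = Real.sqrt ((Q *ᵥ zB) ⬝ᵥ (Q *ᵥ zB))} := ⟨z0, hz0n, rfl⟩
    exact le_trans (Real.sqrt_nonneg _) (hν.1 hmem)
  -- the operator norm bound
  have hbound : ∀ y : PS nB → ℝ, (Q *ᵥ y) ⬝ᵥ (Q *ᵥ y) ≤ (ν * ν) * (y ⬝ᵥ y) := by
    intro y
    by_cases hy : y = 0
    · simp [hy]
    · have hyy0 : 0 < y ⬝ᵥ y := by
        rcases lt_or_eq_of_le (Finset.sum_nonneg fun i _ => mul_self_nonneg (y i)) with h | h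
        · exact h
        · exact absurd (dotProduct_self_eq_zero.1 h.symm) hy
      set aa : ℝ := Real.sqrt (y ⬝ᵥ y) with haa
      have ha : 0 < aa := Real.sqrt_pos.2 hyy0
      have ha2 : aa * aa = y ⬝ᵥ y := Real.mul_self_sqrt hyy0.le
      set z : PS nB → ℝ := aa⁻¹ • y with hz
      have hzn : z ⬝ᵥ z = 1 := by
        rw [hz, smul_dotProduct, dotProduct_smul, smul_eq_mul, smul_eq_mul, ← ha2]
        field_simp
      have hmem : Real.sqrt ((Q *ᵥ z) ⬝ᵥ (Q *ᵥ z)) ∈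
          {c : ℝ | ∃ zB : PS nB → ℝ, zB ⬝ᵥ zB = 1 ∧
            c = Real.sqrt ((Q *ᵥ zB) ⬝ᵥ (Q *ᵥ zB))} := ⟨z, hzn, rfl⟩
      have hle : Real.sqrt ((Q *ᵥ z) ⬝ᵥ (Q *ᵥ z)) ≤ ν := hν.1 hmem
      have hw0 : 0 ≤ (Q *ᵥ z) ⬝ᵥ (Q *ᵥ z) := Finset.sum_nonneg fun i _ => mul_self_nonneg _
      have hwν : (Q *ᵥ z) ⬝ᵥ (Q *ᵥ z) ≤ ν * ν := by
        nlinarith [Real.sq_sqrt hw0, Real.sqrt_nonneg ((Q *ᵥ z) ⬝ᵥ (Q *ᵥ z))]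
      have hQz : (Q *ᵥ z) ⬝ᵥ (Q *ᵥ z) = aa⁻¹ * (aa⁻¹ * ((Q *ᵥ y) ⬝ᵥ (Q *ᵥ y))) := by
        rw [hz, Matrix.mulVec_smul, smul_dotProduct, dotProduct_smul, smul_eq_mul, smul_eq_mul]
      rw [hQz] at hwν
      have haane : aa ≠ 0 := ha.ne'
      calc (Q *ᵥ y) ⬝ᵥ (Q *ᵥ y) = (aa * aa) * (aa⁻¹ * (aa⁻¹ * ((Q *ᵥ y) ⬝ᵥ (Q *ᵥ y)))) := by
            field_simp
        _ ≤ (aa * aa) * (ν * ν) := by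
            apply mul_le_mul_of_nonneg_left hwν (by positivity)
        _ = (ν * ν) * (y ⬝ᵥ y) := by rw [ha2]; ring
  -- the block-diagonal comparison matrix
  set At : Matrix (PS nA) (PS nA) ℝ := P.toBlocks₁₁ + ν • 1 with hAt
  set Bt : Matrix (PS nB) (PS nB) ℝ := P.toBlocks₂₂ + ν • 1 with hBt
  have hAtP : At.PosDef := hP11.add_posSemidef (smul_posSemidef_real hν0 Matrix.PosSemidef.one)
  have hBtP : Bt.PosDef := hP22.add_posSemidef (smul_posSemidef_real hν0 Matrix.PosSemidef.one)
  set D : Matrix (PS nA ⊕ PS nB) (PS nA ⊕ PS nB) ℝ := Matrix.fromBlocks At 0 0 Bt with hD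
  have hQ21 : P.toBlocks₂₁ = Qᵀ := by
    ext i j
    show P (Sum.inr i) (Sum.inl j) = P (Sum.inl j) (Sum.inr i)
    exact (hP.1.apply (Sum.inr i) (Sum.inl j)).symm.trans (star_trivial _)
  have hDP : (D - P).PosSemidef := by
    have hsplit : D - P = Matrix.fromBlocks (ν • 1) (-Q) (-Qᵀ) (ν • 1) := by
      conv_lhs => rw [← Matrix.fromBlocks_toBlocks P]
      rw [hD, fromBlocks_sub', hQ21, hAt, hBt, add_sub_cancel_left, add_sub_cancel_left,
        zero_sub, zero_sub]
    rw [hsplit]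
    exact block_psd hν0 hbound
  have hDpd : D.PosDef := by
    have h1 := hP.add_posSemidef hDP
    have h2 : P + (D - P) = D := by abel
    rwa [h2] at h1
  have hmain : (P⁻¹ - D⁻¹).PosSemidef := inv_sub_inv_posSemidef hP hDpd hDP
  -- Sig in terms of P
  have hSig : Sig = (hbar / 2) • P⁻¹ := by
    have hPinv : P⁻¹ = (2 / hbar) • Sig := by
      apply Matrix.inv_eq_right_inv
      rw [hPdef, Matrix.smul_mul, Matrix.mul_smul, smul_smul,
        Matrix.nonsing_inv_mul Sig (isUnitDet_of_posDef hpos)]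
      rw [show (hbar / 2) * (2 / hbar) = 1 by field_simp]
      exact one_smul _ _
    rw [hPinv, smul_smul, show (hbar / 2) * (2 / hbar) = 1 by field_simp, one_smul]
  have hDinv : D⁻¹ = Matrix.fromBlocks At⁻¹ 0 0 Bt⁻¹ := by
    apply Matrix.inv_eq_right_inv
    rw [hD, Matrix.fromBlocks_multiply]
    simp only [Matrix.mul_zero, Matrix.zero_mul, add_zero, zero_add,
      Matrix.mul_nonsing_inv _ (isUnitDet_of_posDef hAtP),
      Matrix.mul_nonsing_inv _ (isUnitDet_of_posDef hBtP), Matrix.fromBlocks_one]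
  refine ⟨(hbar / 2) • At⁻¹, (hbar / 2) • Bt⁻¹, ?_, ?_, ?_, ?_, ?_⟩
  · exact isSymm_of_isHermitian (smul_posDef_real hhb2 hAtP.inv).1
  · exact isSymm_of_isHermitian (smul_posDef_real hhb2 hBtP.inv).1
  · show (((hbar / 2) • At⁻¹).map Complex.ofReal
      + (hbar / 2 : ℝ) • Complex.I • (symplJ nA).map Complex.ofReal).PosSemidef
    have hmap : ((hbar / 2) • At⁻¹).map Complex.ofReal
        = (hbar / 2 : ℝ) • ((At⁻¹).map Complex.ofReal) := by
      ext i j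
      simp [Matrix.map_apply, Matrix.smul_apply, smul_eq_mul, Complex.ofReal_mul,
        Complex.real_smul]
    rw [hmap, ← smul_add]
    exact smul_posSemidef_complex hhb2.le (quantum_aux hAtP hAc)
  · show (((hbar / 2) • Bt⁻¹).map Complex.ofReal
      + (hbar / 2 : ℝ) • Complex.I • (symplJ nB).map Complex.ofReal).PosSemidef
    have hmap : ((hbar / 2) • Bt⁻¹).map Complex.ofReal
        = (hbar / 2 : ℝ) • ((Bt⁻¹).map Complex.ofReal) := by
      ext i j
      simp [Matrix.map_apply, Matrix.smul_apply, smul_eq_mul, Complex.ofReal_mul,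
        Complex.real_smul]
    rw [hmap, ← smul_add]
    exact smul_posSemidef_complex hhb2.le (quantum_aux hBtP hBc)
  · have heq : Sig - Matrix.fromBlocks ((hbar / 2) • At⁻¹) 0 0 ((hbar / 2) • Bt⁻¹)
        = (hbar / 2) • (P⁻¹ - D⁻¹) := by
      rw [smul_sub, ← hSig, hDinv, Matrix.fromBlocks_smul]
      simp only [smul_zero]
    rw [heq]
    exact smul_posSemidef_real hhb2.le hmain
end
end
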